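/- The fractional oriented chromatic numbers of the directed cycles of lengths 4 and 5 are 4 and 5 respectively. -/

import Mathlib

/-- An oriented graph: a directed graph with no loops and no directed 2-cycles. -/
structure OGraph (V : Type*) where
  adj : V → V → Prop
  irrefl : ∀ v, ¬ adj v v
  asymm : ∀ u v, adj u v → ¬ adj v u

/-- A homomorphism of oriented graphs. -/
def OGraph.Hom {V W : Type*} (G : OGraph V) (H : OGraph W) (f : V → W) : Prop :=
  ∀ u v, G.adj u v → H.adj (f u) (f v)

/-- `f` is a `b`-fold oriented `k`-coloring of `G`. -/
def IsFoldColoring {V : Type*} (G : OGraph V) (b k : ℕ) (f : V → Finset (Fin k)) : Prop :=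
  (∀ v, (f v).card = b) ∧
  (∀ u v, G.adj u v → Disjoint (f u) (f v)) ∧
  (∀ x y z w, G.adj x y → G.adj z w → ¬ Disjoint (f x) (f w) → Disjoint (f y) (f z))

/-- The `b`-fold oriented chromatic number. -/
noncomputable def foldChrom {V : Type*} (G : OGraph V) (b : ℕ) : ℕ :=
  sInf {k | ∃ f : V → Finset (Fin k), IsFoldColoring G b k f}

/-- The fractional oriented chromatic number: the infimum of `k/b` over all
`b`-fold oriented `k`-colorings. -/
noncomputable def fracChrom {V : Type*} (G : OGraph V) : ℝ :=
  sInf {x : ℝ | ∃ (b k : ℕ) (f : V → Finset (Fin k)),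
    0 < b ∧ IsFoldColoring G b k f ∧ x = (k : ℝ) / b}

/-- The directed cycle of length `r`. -/
def dirCycle (r : ℕ) (hr : 3 ≤ r) : OGraph (ZMod r) where
  adj u v := v = u + 1
  irrefl := by
    intro v hv
    haveI : NeZero r := ⟨by omega⟩
    have h1 : ((1 : ℕ) : ZMod r) = 0 := by
      have := left_eq_add.mp hv
      simpa using this
    rw [ZMod.natCast_eq_zero_iff] at h1
    have := Nat.le_of_dvd one_pos h1
    omega
  asymm := by
    intro u v h1 h2
    haveI : NeZero r := ⟨by omega⟩
    have : u = u + 1 + 1 := by rw [← h1]; exact h2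
    have h2' : ((2 : ℕ) : ZMod r) = 0 := by
      have := left_eq_add.mp (by rw [add_assoc] at this; exact this)
      push_cast
      simpa [one_add_one_eq_two] using this
    rw [ZMod.natCast_eq_zero_iff] at h2'
    have := Nat.le_of_dvd two_pos h2'
    omega

/-!
In a `b`-fold oriented coloring the color sets of `u` and `w` are disjoint not only when `u → w`
is an arc, but also when `u → v → w` is a 2-dipath: applied to the arcs `v → w` and `u → v`,
the defining condition sees `f v ∩ f v ≠ ∅` (as `b > 0`) and so forces `f w ∩ f u = ∅`.
Hence in an oriented clique, where any two vertices are joined by an arc or a 2-dipath, all color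
sets are pairwise disjoint and `k ≥ |V| b`; coloring each vertex with its own color attains
`k / b = |V|`.
The directed cycles of lengths 4 and 5 are oriented cliques.
-/

open Finset

namespace OGraph

variable {V : Type*}

def WithinTwo (G : OGraph V) (u v : V) : Prop :=
  G.adj u v ∨ ∃ w, G.adj u w ∧ G.adj w v

def IsOrientedClique (G : OGraph V) : Prop :=
  ∀ u v, u ≠ v → G.WithinTwo u v ∨ G.WithinTwo v u

end OGraph

namespace IsFoldColoring

variable {V : Type*} {G : OGraph V} {b k : ℕ} {f : V → Finset (Fin k)}

theorem disjoint_of_adj_of_adj (hf : IsFoldColoring G b k f) (hb : 0 < b) {u v w : V}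
    (huv : G.adj u v) (hvw : G.adj v w) : Disjoint (f u) (f w) := by
  have hne : ¬ Disjoint (f v) (f v) := by
    rw [disjoint_self, bot_eq_empty, ← card_eq_zero, hf.1 v]
    exact hb.ne'
  exact (hf.2.2 v w u v hvw huv hne).symm

theorem disjoint_of_withinTwo (hf : IsFoldColoring G b k f) (hb : 0 < b) {u v : V}
    (h : G.WithinTwo u v) : Disjoint (f u) (f v) := by
  rcases h with huv | ⟨w, huw, hwv⟩
  · exact hf.2.1 u v huv
  · exact hf.disjoint_of_adj_of_adj hb huw hwv

theorem pairwise_disjoint (hf : IsFoldColoring G b k f) (hb : 0 < b)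
    (hG : G.IsOrientedClique) : Pairwise fun u v => Disjoint (f u) (f v) := by
  intro u v huv
  rcases hG u v huv with h | h
  · exact hf.disjoint_of_withinTwo hb h
  · exact (hf.disjoint_of_withinTwo hb h).symm

theorem card_mul_le [Fintype V] (hf : IsFoldColoring G b k f) (hb : 0 < b)
    (hG : G.IsOrientedClique) : Fintype.card V * b ≤ k := by
  have hunion : (univ.biUnion f).card = Fintype.card V * b := by
    rw [card_biUnion fun u _ v _ huv => hf.pairwise_disjoint hb hG huv]
    simp [hf.1, card_univ]
  simpa [hunion] using card_le_univ (univ.biUnion f)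

end IsFoldColoring

theorem isFoldColoring_singleton {V : Type*} (G : OGraph V) {k : ℕ} {e : V → Fin k}
    (he : Function.Injective e) : IsFoldColoring G 1 k fun v => {e v} := by
  refine ⟨fun _ => card_singleton _, fun u v huv => ?_, fun x y z w hxy hzw hxw => ?_⟩
  · rw [disjoint_singleton, he.ne_iff]
    rintro rfl
    exact G.irrefl u huv
  · rw [disjoint_singleton, not_not, he.eq_iff] at hxw
    subst hxw
    rw [disjoint_singleton, he.ne_iff]
    rintro rfl
    exact G.asymm _ _ hzw hxy

theorem fracChrom_eq_card_of_isOrientedClique {V : Type*} [Fintype V] {G : OGraph V}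
    (hG : G.IsOrientedClique) : fracChrom G = Fintype.card V := by
  have hmem : (Fintype.card V : ℝ) ∈ {x : ℝ | ∃ (b k : ℕ) (f : V → Finset (Fin k)),
      0 < b ∧ IsFoldColoring G b k f ∧ x = (k : ℝ) / b} :=
    ⟨1, _, _, one_pos, isFoldColoring_singleton G (Fintype.equivFin V).injective, by simp⟩
  refine le_antisymm (csInf_le ⟨0, ?_⟩ hmem) (le_csInf ⟨_, hmem⟩ ?_)
  · rintro x ⟨b, k, f, -, -, rfl⟩
    positivity
  · rintro x ⟨b, k, f, hb, hf, rfl⟩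
    rw [le_div_iff₀ (Nat.cast_pos.mpr hb)]
    exact_mod_cast hf.card_mul_le hb hG

theorem dirCycle_four_isOrientedClique : (dirCycle 4 (by norm_num)).IsOrientedClique := by
  unfold OGraph.IsOrientedClique OGraph.WithinTwo dirCycle
  decide

theorem dirCycle_five_isOrientedClique : (dirCycle 5 (by norm_num)).IsOrientedClique := by
  unfold OGraph.IsOrientedClique OGraph.WithinTwo dirCycle
  decide

theorem stmt12 :
    fracChrom (dirCycle 4 (by norm_num)) = 4 ∧ fracChrom (dirCycle 5 (by norm_num)) = 5 := by
  rw [fracChrom_eq_card_of_isOrientedClique dirCycle_four_isOrientedClique,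
    fracChrom_eq_card_of_isOrientedClique dirCycle_five_isOrientedClique]
  simp [ZMod.card]
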